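/- arXiv:1506.08793 — 2 statements merged into one kernel-verified Lean document; each statement's English description precedes it below -/
import Mathlib

section
/- For $a, b > 0$, let $U = \{(x,y) \in \mathbb{R}^2 : 2a(y^2 + y) + b(x^2 + 2x) < 0 \text{ and } a(y^2+2y) + 2b(x^2+x) < 0\}$; then the translated regions $U(p,q) = U + (p,q)$ for $(p,q) \in \mathbb{Z}^2$ cover all of $\mathbb{R}^2$, i.e. for every $(x_0,y_0) \in \mathbb{R}^2$ there exists $(p,q) \in \mathbb{Z}^2$ such that $2a((y_0-q)^2 + (y_0-q)) + b((x_0-p)^2 + 2(x_0-p)) < 0$ and $a((y_0-q)^2 + 2(y_0-q)) + 2b((x_0-p)^2 + (x_0-p)) < 0$. -/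
/-- For `a, b > 0`, the interiors of the integer translates of the quiver regions on
`ℙ¹×ℙ¹` cover the `xy`-plane: for every `(x₀,y₀) ∈ ℝ²` there is `(p,q) ∈ ℤ²` with
`2a((y₀-q)² + (y₀-q)) + b((x₀-p)² + 2(x₀-p)) < 0` and
`a((y₀-q)² + 2(y₀-q)) + 2b((x₀-p)² + (x₀-p)) < 0`. -/
theorem stmt_12 (a b : ℝ) (ha : 0 < a) (hb : 0 < b) (x0 y0 : ℝ) :
    ∃ p q : ℤ,
      2 * a * ((y0 - q) ^ 2 + (y0 - q)) + b * ((x0 - p) ^ 2 + 2 * (x0 - p)) < 0 ∧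
      a * ((y0 - q) ^ 2 + 2 * (y0 - q)) + 2 * b * ((x0 - p) ^ 2 + (x0 - p)) < 0 := by
  refine ⟨⌊x0⌋ + 1, ⌊y0⌋ + 1, ?_, ?_⟩ <;>
  · have h1 : (⌊x0⌋ : ℝ) ≤ x0 := Int.floor_le x0
    have h2 : x0 < ⌊x0⌋ + 1 := Int.lt_floor_add_one x0
    have h3 : (⌊y0⌋ : ℝ) ≤ y0 := Int.floor_le y0
    have h4 : y0 < ⌊y0⌋ + 1 := Int.lt_floor_add_one y0
    push_cast
    nlinarith [sq_nonneg (x0 - ⌊x0⌋ - 1), sq_nonneg (y0 - ⌊y0⌋ - 1),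
      mul_pos ha (mul_pos (sub_pos.2 h4) (by nlinarith : (0:ℝ) < y0 - ⌊y0⌋ + 1)),
      mul_pos hb (mul_pos (sub_pos.2 h2) (by nlinarith : (0:ℝ) < x0 - ⌊x0⌋ + 1))]
end

section
/- Let $b > a > 0$. The closed region $\{(x,y) : -1 \le x \le 0,\ x - 1 \le y \le x\} \setminus \{(0,0), (-1,-2)\}$ is contained in the region where $(3b-a)x^2 - 2axy + 2ay^2 + 3(b-a)x + 3ay < 0$ together with its boundary minus the two points; consequently the integer translates by $(p,q) \mapsto (x+p, y+p+q)$-type lattice shifts of the open ellipse regions $\{(x,y) : (3b-a)(x-p)^2 - 2a(x-p)(y-q) + 2a(y-q)^2 + 3(b-a)(x-p) + 3a(y-q) < 0\}$, $(p,q) \in \mathbb{Z}^2$, cover all of $\mathbb{R}^2$. -/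
/-!
Write `Q_{a,b}` for the quadratic form of the ellipse. It splits as
`Q_{a,b}(x,y) = 3(b-a)·x(x+1) + a·Q_{1,1}(x,y)`. On the parallelogram `-1 ≤ x ≤ 0, 0 ≤ x - y ≤ 1`
the first summand is `≤ 0`, and so is `Q_{1,1}`, being a negative combination of products of the
nonnegative quantities `-x, x + 1, x - y, 1 - (x - y)`. On the half-open parallelogram
`-1 ≤ x < 0, x - 1 < y ≤ x` one of the two summands is even negative (on the edge `x = -1`,
`Q_{1,1}(-1,y) = (2y+1)(y+2)`), and every point of the plane is moved into this fundamental domain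
by the translation `(p, q) ∈ ℤ²` with `p = ⌊x⌋ + 1`, `p - q = ⌊x - y⌋`.
-/

def ellipseForm (a b x y : ℝ) : ℝ :=
  (3 * b - a) * x ^ 2 - 2 * a * x * y + 2 * a * y ^ 2 + 3 * (b - a) * x + 3 * a * y

lemma ellipseForm_eq (a b x y : ℝ) :
    ellipseForm a b x y = 3 * (b - a) * (x * (x + 1)) + a * ellipseForm 1 1 x y := by
  unfold ellipseForm
  ring

lemma ellipseForm_one_one_nonpos {x y : ℝ} (hx₀ : -1 ≤ x) (hx₁ : x ≤ 0) (hy₀ : x - 1 ≤ y)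
    (hy₁ : y ≤ x) : ellipseForm 1 1 x y ≤ 0 := by
  unfold ellipseForm
  nlinarith [mul_nonneg (neg_nonneg.2 hx₁) (neg_le_iff_add_nonneg'.1 hx₀),
    mul_nonneg (sub_nonneg.2 hy₁) (by linarith : (0 : ℝ) ≤ 1 - (x - y)),
    mul_nonneg (neg_le_iff_add_nonneg'.1 hx₀) (sub_nonneg.2 hy₁),
    mul_nonneg (neg_nonneg.2 hx₁) (by linarith : (0 : ℝ) ≤ 1 - (x - y))]

lemma ellipseForm_nonpos {a b x y : ℝ} (ha : 0 ≤ a) (hab : a ≤ b) (hx₀ : -1 ≤ x) (hx₁ : x ≤ 0)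
    (hy₀ : x - 1 ≤ y) (hy₁ : y ≤ x) : ellipseForm a b x y ≤ 0 := by
  rw [ellipseForm_eq]
  have hx : x * (x + 1) ≤ 0 := mul_nonpos_of_nonpos_of_nonneg hx₁ (by linarith)
  have hF := ellipseForm_one_one_nonpos hx₀ hx₁ hy₀ hy₁
  nlinarith [mul_nonpos_of_nonneg_of_nonpos ha hF]

lemma ellipseForm_neg {a b x y : ℝ} (ha : 0 < a) (hab : a < b) (hx₀ : -1 ≤ x) (hx₁ : x < 0)
    (hy₀ : x - 1 < y) (hy₁ : y ≤ x) : ellipseForm a b x y < 0 := by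
  rw [ellipseForm_eq]
  have hF := ellipseForm_one_one_nonpos hx₀ hx₁.le hy₀.le hy₁
  rcases hx₀.lt_or_eq with hx₀ | rfl
  · have hx : x * (x + 1) < 0 := mul_neg_of_neg_of_pos hx₁ (by linarith)
    nlinarith [mul_nonpos_of_nonneg_of_nonpos ha.le hF, mul_neg_of_pos_of_neg (sub_pos.2 hab) hx]
  · have hF : ellipseForm 1 1 (-1) y < 0 := by
      have : ellipseForm 1 1 (-1) y = (2 * y + 1) * (y + 2) := by unfold ellipseForm; ring
      rw [this]
      exact mul_neg_of_neg_of_pos (by linarith) (by linarith)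
    nlinarith [mul_neg_of_pos_of_neg ha hF]

lemma exists_int_sub_mem_parallelogram (x y : ℝ) :
    ∃ p q : ℤ, -1 ≤ x - p ∧ x - p < 0 ∧ (x - p) - 1 < y - q ∧ y - q ≤ x - p := by
  refine ⟨⌊x⌋ + 1, ⌊x⌋ + 1 - ⌊x - y⌋, ?_⟩
  have := Int.floor_le x
  have := Int.lt_floor_add_one x
  have := Int.floor_le (x - y)
  have := Int.lt_floor_add_one (x - y)
  push_cast
  refine ⟨?_, ?_, ?_, ?_⟩ <;> linarith

/-- Let `b > a > 0`.  The closed parallelogram `{-1 ≤ x ≤ 0, x-1 ≤ y ≤ x}` minus the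
two corners `(0,0)` and `(-1,-2)` is contained in the closed region
`(3b-a)x² - 2axy + 2ay² + 3(b-a)x + 3ay ≤ 0` bounded by the ellipse; consequently
the open regions bounded by the integer translates of the ellipse cover all of `ℝ²`:
for every `(x,y)` there is `(p,q) ∈ ℤ²` with
`(3b-a)(x-p)² - 2a(x-p)(y-q) + 2a(y-q)² + 3(b-a)(x-p) + 3a(y-q) < 0`. -/
theorem stmt_17 (a b : ℝ) (ha : 0 < a) (hab : a < b) :
    (∀ x y : ℝ, -1 ≤ x → x ≤ 0 → x - 1 ≤ y → y ≤ x →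
      (x, y) ≠ ((0 : ℝ), (0 : ℝ)) → (x, y) ≠ ((-1 : ℝ), (-2 : ℝ)) →
        (3 * b - a) * x ^ 2 - 2 * a * x * y + 2 * a * y ^ 2
          + 3 * (b - a) * x + 3 * a * y ≤ 0) ∧
    (∀ x y : ℝ, ∃ p q : ℤ,
      (3 * b - a) * (x - p) ^ 2 - 2 * a * (x - p) * (y - q) + 2 * a * (y - q) ^ 2
        + 3 * (b - a) * (x - p) + 3 * a * (y - q) < 0) := by
  refine ⟨fun x y hx₀ hx₁ hy₀ hy₁ _ _ => ellipseForm_nonpos ha.le hab.le hx₀ hx₁ hy₀ hy₁,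
    fun x y => ?_⟩
  obtain ⟨p, q, hx₀, hx₁, hy₀, hy₁⟩ := exists_int_sub_mem_parallelogram x y
  exact ⟨p, q, ellipseForm_neg ha hab hx₀ hx₁ hy₀ hy₁⟩
end
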